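/- Wirsing's estimate: for f ∈ ℤ[X] of degree d ≥ 1 with f(θ) ≠ 0, θ ∈ ℝ, and 0 < ρ ≤ 1, the product z_ρ of |θ − α| over all complex roots α of f with |θ − α| ≤ ρ (times the leading coefficient contribution as in the θ-disk measure) satisfies z_ρ ≥ 2^{−(d+1)} (d+1)^{−1/2} max(1,|θ|)^{−d} · |f(θ)|/h(f), where h(f) is the height of f. -/

import Mathlib

open Polynomial

/-- The height of an integer polynomial: the maximum absolute value of its coefficients. -/
def heightN (f : Polynomial ℤ) : ℕ := f.support.sup fun i => (f.coeff i).natAbs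

/-- The θ-disk measure at radius ρ: |a_d| times the product of |θ - α| over the complex
roots α of f with |θ - α| ≤ ρ. -/
noncomputable def diskMeasure (f : Polynomial ℤ) (θ ρ : ℝ) : ℝ :=
  |(f.leadingCoeff : ℝ)| *
    (((f.map (Int.castRingHom ℂ)).roots.map fun α => ‖(θ : ℂ) - α‖).filter
        (fun v => v ≤ ρ)).prod

open Multiset Complex


noncomputable def l2sq (p : Polynomial ℂ) : ℝ :=
  ∑ i ∈ Finset.range (p.natDegree + 1), Complex.normSq (p.coeff i)

lemma l2sq_nonneg (p : Polynomial ℂ) : 0 ≤ l2sq p :=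
  Finset.sum_nonneg fun _ _ => Complex.normSq_nonneg _

lemma l2sq_eq_sum (p : Polynomial ℂ) {N : ℕ} (hN : p.natDegree < N) :
    l2sq p = ∑ i ∈ Finset.range N, Complex.normSq (p.coeff i) := by
  refine Finset.sum_subset (Finset.range_subset_range.2 hN) ?_
  intro i hi hni
  rw [Polynomial.coeff_eq_zero_of_natDegree_lt (by simpa using hni)]
  simp

lemma sum_shift (p : Polynomial ℂ) {N : ℕ} (hN : p.natDegree + 1 < N) :
    ∑ j ∈ Finset.range N, Complex.normSq ((X * p).coeff j)
      = ∑ j ∈ Finset.range N, Complex.normSq (p.coeff j) := by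
  obtain ⟨m, rfl⟩ : ∃ m, N = m + 1 := ⟨N - 1, by omega⟩
  have h1 := Finset.sum_range_succ' (fun j => Complex.normSq ((X * p).coeff j)) m
  have h2 := Finset.sum_range_succ (fun j => Complex.normSq (p.coeff j)) m
  rw [h1, h2]
  have h0 : (X * p).coeff 0 = 0 := by simp [Polynomial.mul_coeff_zero]
  have hm : p.coeff m = 0 := Polynomial.coeff_eq_zero_of_natDegree_lt (by omega)
  simp [h0, hm, Polynomial.coeff_X_mul]


lemma term_id (α u v : ℂ) :
    Complex.normSq (u - α * v) - Complex.normSq ((starRingEnd ℂ) α * u - v)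
      = (1 - Complex.normSq α) * (Complex.normSq u - Complex.normSq v) := by
  simp only [Complex.normSq_apply, Complex.sub_re, Complex.sub_im, Complex.mul_re,
    Complex.mul_im, Complex.conj_re, Complex.conj_im]
  ring

lemma l2sq_swap (α : ℂ) (p : Polynomial ℂ) :
    l2sq ((X - C α) * p) = l2sq ((C ((starRingEnd ℂ) α) * X - 1) * p) := by
  set N := p.natDegree + 2 with hNdef
  have hd1 : ((X - C α) * p).natDegree < N := by
    calc ((X - C α) * p).natDegree ≤ (X - C α).natDegree + p.natDegree :=
          Polynomial.natDegree_mul_le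
    _ ≤ 1 + p.natDegree := by rw [Polynomial.natDegree_X_sub_C]
    _ < N := by omega
  have hd2 : ((C ((starRingEnd ℂ) α) * X - 1) * p).natDegree < N := by
    calc ((C ((starRingEnd ℂ) α) * X - 1) * p).natDegree
        ≤ (C ((starRingEnd ℂ) α) * X - 1).natDegree + p.natDegree :=
          Polynomial.natDegree_mul_le
    _ ≤ 1 + p.natDegree := by
        gcongr
        refine le_trans (Polynomial.natDegree_sub_le _ _) ?_
        simp [Polynomial.natDegree_C_mul_le]
        exact le_trans (Polynomial.natDegree_C_mul_le _ _) (by simp)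
    _ < N := by omega
  rw [l2sq_eq_sum _ hd1, l2sq_eq_sum _ hd2]
  have hc1 : ∀ j, ((X - C α) * p).coeff j = (X * p).coeff j - α * p.coeff j := by
    intro j; rw [sub_mul]; simp [Polynomial.coeff_sub, Polynomial.coeff_C_mul]
  have hc2 : ∀ j, ((C ((starRingEnd ℂ) α) * X - 1) * p).coeff j
      = (starRingEnd ℂ) α * (X * p).coeff j - p.coeff j := by
    intro j; rw [sub_mul, mul_assoc]; simp [Polynomial.coeff_sub, Polynomial.coeff_C_mul]
  have key : ∑ j ∈ Finset.range N, Complex.normSq (((X - C α) * p).coeff j)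
      - ∑ j ∈ Finset.range N, Complex.normSq (((C ((starRingEnd ℂ) α) * X - 1) * p).coeff j)
      = (1 - Complex.normSq α) *
        (∑ j ∈ Finset.range N, Complex.normSq ((X * p).coeff j)
          - ∑ j ∈ Finset.range N, Complex.normSq (p.coeff j)) := by
    rw [← Finset.sum_sub_distrib, ← Finset.sum_sub_distrib, Finset.mul_sum]
    refine Finset.sum_congr rfl fun j _ => ?_
    rw [hc1, hc2, term_id]
  have hs := sum_shift p (by omega : p.natDegree + 1 < N)
  rw [hs, sub_self, mul_zero] at key
  linarith [key]

noncomputable def flipF (α : ℂ) : Polynomial ℂ :=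
  if 1 < ‖α‖ then C ((starRingEnd ℂ) α) * X - 1 else X - C α

lemma l2sq_flip (α : ℂ) (p : Polynomial ℂ) :
    l2sq (flipF α * p) = l2sq ((X - C α) * p) := by
  unfold flipF; split_ifs with h
  · exact (l2sq_swap α p).symm
  · rfl

lemma l2sq_flip_prod (s : Multiset ℂ) (p : Polynomial ℂ) :
    l2sq ((s.map flipF).prod * p) = l2sq ((s.map fun α => X - C α).prod * p) := by
  induction s using Multiset.induction_on generalizing p with
  | empty => simp
  | cons a t ih =>
    rw [Multiset.map_cons, Multiset.map_cons, Multiset.prod_cons, Multiset.prod_cons]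
    have e1 : flipF a * (t.map flipF).prod * p = flipF a * ((t.map flipF).prod * p) := by ring
    have e2 : (t.map flipF).prod * ((X - C a) * p)
        = (X - C a) * ((t.map flipF).prod * p) := by ring
    have e3 : (t.map fun α => X - C α).prod * ((X - C a) * p)
        = (X - C a) * (t.map fun α => X - C α).prod * p := by ring
    rw [e1, l2sq_flip, ← e2, ih ((X - C a) * p), e3]

lemma flipF_natDegree (α : ℂ) : (flipF α).natDegree = 1 := by
  unfold flipF; split_ifs with h
  · have hα : (starRingEnd ℂ) α ≠ 0 := by
      intro h0
      have h1 : ‖α‖ = 0 := by rw [← Complex.norm_conj, h0]; simp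
      rw [h1] at h; linarith
    have : C ((starRingEnd ℂ) α) * X - 1 = C ((starRingEnd ℂ) α) * X + C (-1) := by
      simp [sub_eq_add_neg]
    rw [this]
    compute_degree!
    intro h0
    rw [h0] at h
    simp at h
    linarith
  · exact Polynomial.natDegree_X_sub_C α

lemma flipF_ne_zero (α : ℂ) : flipF α ≠ 0 := fun h => by
  have := flipF_natDegree α; rw [h] at this; simp at this

lemma flipF_leadingCoeff (α : ℂ) :
    ‖(flipF α).leadingCoeff‖ = max 1 (‖α‖) := by
  unfold flipF; split_ifs with h
  · have hα : (starRingEnd ℂ) α ≠ 0 := by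
      intro h0
      have h1 : ‖α‖ = 0 := by rw [← Complex.norm_conj, h0]; simp
      rw [h1] at h; linarith
    have hnd : (C ((starRingEnd ℂ) α) * X - 1).natDegree = 1 := by
      have := flipF_natDegree α; unfold flipF at this; rwa [if_pos h] at this
    rw [Polynomial.leadingCoeff, hnd]
    simp [Polynomial.coeff_C_mul, Polynomial.coeff_one, Complex.norm_conj, max_eq_right (le_of_lt h)]
  · rw [Polynomial.leadingCoeff, Polynomial.natDegree_X_sub_C]
    push_neg at h
    simp [max_eq_left h]

lemma abs_multiset_prod (s : Multiset ℂ) :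
    ‖s.prod‖ = (s.map (‖·‖)).prod := by
  induction s using Multiset.induction_on with
  | empty => simp
  | cons a t ih => simp [Multiset.prod_cons, map_mul, ih]

lemma landau (s : Multiset ℂ) (c : ℂ) :
    ‖c‖ * (s.map fun α => max 1 (‖α‖)).prod
      ≤ Real.sqrt (l2sq (C c * (s.map fun α => X - C α).prod)) := by
  by_cases hc : c = 0
  · subst hc; simp
  set q := C c * (s.map flipF).prod with hq
  have hl2 : l2sq q = l2sq (C c * (s.map fun α => X - C α).prod) := by
    have e1 : q = (s.map flipF).prod * C c := by rw [hq]; ring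
    have e2 : C c * (s.map fun α => X - C α).prod
        = (s.map fun α => X - C α).prod * C c := by ring
    rw [e1, e2, l2sq_flip_prod]
  have h0mem : (0 : Polynomial ℂ) ∉ s.map flipF := by
    intro hmem
    obtain ⟨a, _, ha⟩ := Multiset.mem_map.1 hmem
    exact flipF_ne_zero a ha
  have hprodne : (s.map flipF).prod ≠ 0 := Multiset.prod_ne_zero h0mem
  have hnd : q.natDegree = Multiset.card s := by
    rw [hq, Polynomial.natDegree_mul (by simpa using hc) hprodne,
      Polynomial.natDegree_C, Polynomial.natDegree_multiset_prod _ h0mem,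
      Multiset.map_map]
    simp [flipF_natDegree]
  have hlead : ‖q.leadingCoeff‖
      = ‖c‖ * (s.map fun α => max 1 (‖α‖)).prod := by
    rw [hq, Polynomial.leadingCoeff_mul, Polynomial.leadingCoeff_C,
      Polynomial.leadingCoeff_multiset_prod, norm_mul, abs_multiset_prod,
      Multiset.map_map, Multiset.map_map]
    have hmc : s.map (((fun z : ℂ => ‖z‖) ∘ fun f : Polynomial ℂ => f.leadingCoeff) ∘ flipF)
        = s.map fun α => max 1 (‖α‖) :=
      Multiset.map_congr rfl fun a _ => flipF_leadingCoeff a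
    rw [hmc]
  have hcoeff : Complex.normSq (q.coeff q.natDegree) ≤ l2sq q := by
    unfold l2sq
    exact Finset.single_le_sum (fun i _ => Complex.normSq_nonneg _)
      (Finset.self_mem_range_succ q.natDegree)
  rw [← hl2, ← hlead]
  rw [Real.le_sqrt (norm_nonneg _) (l2sq_nonneg _)]
  rw [Complex.sq_norm]
  exact hcoeff

lemma coeff_le_height (f : Polynomial ℤ) (i : ℕ) : |((f.coeff i : ℤ) : ℝ)| ≤ (heightN f : ℝ) := by
  by_cases h : i ∈ f.support
  · have h1 : (f.coeff i).natAbs ≤ heightN f := Finset.le_sup (f := fun j => (f.coeff j).natAbs) h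
    have h2 : (((f.coeff i).natAbs : ℤ) : ℝ) ≤ (heightN f : ℝ) := by exact_mod_cast h1
    rw [← Int.cast_abs, ← Int.natCast_natAbs]
    exact h2
  · rw [Polynomial.notMem_support_iff.1 h]
    simp

lemma one_le_height {f : Polynomial ℤ} (hf : f ≠ 0) : (1 : ℝ) ≤ (heightN f : ℝ) := by
  have h1 : f.natDegree ∈ f.support := Polynomial.natDegree_mem_support_of_nonzero hf
  have h2 : 1 ≤ (f.coeff f.natDegree).natAbs := by
    have := Polynomial.mem_support_iff.1 h1
    omega
  have : 1 ≤ heightN f := le_trans h2 (Finset.le_sup (f := fun j => (f.coeff j).natAbs) h1)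
  exact_mod_cast this

lemma l2sq_map_le (f : Polynomial ℤ) :
    l2sq (f.map (Int.castRingHom ℂ)) ≤ (f.natDegree + 1 : ℝ) * (heightN f : ℝ) ^ 2 := by
  unfold l2sq
  set F := f.map (Int.castRingHom ℂ) with hF
  have hbound : ∀ i ∈ Finset.range (F.natDegree + 1),
      Complex.normSq (F.coeff i) ≤ (heightN f : ℝ) ^ 2 := by
    intro i _
    have hco : F.coeff i = ((f.coeff i : ℝ) : ℂ) := by
      rw [hF, Polynomial.coeff_map]
      simp
    rw [hco, Complex.normSq_ofReal]
    have h1 := coeff_le_height f i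
    nlinarith [_root_.sq_abs ((f.coeff i : ℤ) : ℝ), abs_nonneg ((f.coeff i : ℤ) : ℝ)]
  calc ∑ i ∈ Finset.range (F.natDegree + 1), Complex.normSq (F.coeff i)
      ≤ (Finset.range (F.natDegree + 1)).card • ((heightN f : ℝ) ^ 2) :=
        Finset.sum_le_card_nsmul _ _ _ hbound
  _ = (F.natDegree + 1 : ℝ) * (heightN f : ℝ) ^ 2 := by
        rw [Finset.card_range, nsmul_eq_mul]; push_cast; ring
  _ ≤ (f.natDegree + 1 : ℝ) * (heightN f : ℝ) ^ 2 := by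
        have : F.natDegree ≤ f.natDegree := Polynomial.natDegree_map_le
        have h2 : (0:ℝ) ≤ (heightN f : ℝ) ^ 2 := sq_nonneg _
        have : (F.natDegree + 1 : ℝ) ≤ (f.natDegree + 1 : ℝ) := by exact_mod_cast by omega
        nlinarith

lemma ms_prod_le {s : Multiset ℂ} {g h : ℂ → ℝ} (h0 : ∀ a ∈ s, 0 ≤ g a)
    (hle : ∀ a ∈ s, g a ≤ h a) : (s.map g).prod ≤ (s.map h).prod := by
  induction s using Multiset.induction_on with
  | empty => simp
  | cons a t ih =>
    rw [Multiset.map_cons, Multiset.map_cons, Multiset.prod_cons, Multiset.prod_cons]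
    have hg0 : (0:ℝ) ≤ (t.map g).prod := by
      apply Multiset.prod_nonneg
      intro x hx
      obtain ⟨b, hb, rfl⟩ := Multiset.mem_map.1 hx
      exact h0 b (Multiset.mem_cons_of_mem hb)
    have hha : 0 ≤ h a := le_trans (h0 a (Multiset.mem_cons_self a t)) (hle a (Multiset.mem_cons_self a t))
    exact mul_le_mul (hle a (Multiset.mem_cons_self a t))
      (ih (fun b hb => h0 b (Multiset.mem_cons_of_mem hb))
        (fun b hb => hle b (Multiset.mem_cons_of_mem hb))) hg0 hha

lemma one_le_ms_prod {s : Multiset ℂ} {h : ℂ → ℝ} (h1 : ∀ a ∈ s, 1 ≤ h a) :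
    1 ≤ (s.map h).prod := by
  induction s using Multiset.induction_on with
  | empty => simp
  | cons a t ih =>
    rw [Multiset.map_cons, Multiset.prod_cons]
    have ha := h1 a (Multiset.mem_cons_self a t)
    have ht := ih fun b hb => h1 b (Multiset.mem_cons_of_mem hb)
    nlinarith

lemma ms_prod_pos {s : Multiset ℝ} (h : ∀ a ∈ s, 0 < a) : 0 < s.prod := by
  induction s using Multiset.induction_on with
  | empty => simp
  | cons a t ih =>
    rw [Multiset.prod_cons]
    exact mul_pos (h a (Multiset.mem_cons_self a t))
      (ih fun b hb => h b (Multiset.mem_cons_of_mem hb))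

/-- Wirsing's estimate: for f of degree d ≥ 1 with f(θ) ≠ 0 and 0 < ρ ≤ 1,
z_ρ(f)_θ ≥ 2^(-(d+1)) (d+1)^(-1/2) max(1,|θ|)^(-d) · |f(θ)| / h(f). -/
theorem wirsing_estimate (f : Polynomial ℤ) (θ ρ : ℝ) (hd : 1 ≤ f.natDegree)
    (hθ : Polynomial.eval θ (f.map (Int.castRingHom ℝ)) ≠ 0) (hρ0 : 0 < ρ) (hρ1 : ρ ≤ 1) :
    ((2 : ℝ) ^ (f.natDegree + 1))⁻¹ * (Real.sqrt (f.natDegree + 1))⁻¹ *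
        ((max 1 |θ|) ^ f.natDegree)⁻¹ *
        (|Polynomial.eval θ (f.map (Int.castRingHom ℝ))| / (heightN f : ℝ)) ≤
      diskMeasure f θ ρ := by
  have hf0 : f ≠ 0 := by rintro rfl; simp at hθ
  set F := f.map (Int.castRingHom ℂ) with hF
  have hFne : F ≠ 0 := (Polynomial.map_ne_zero_iff Int.cast_injective).2 hf0
  have hevalC : F.eval (θ:ℂ) = ((Polynomial.eval θ (f.map (Int.castRingHom ℝ)) : ℝ) : ℂ) := by
    have hcomp : F = (f.map (Int.castRingHom ℝ)).map (algebraMap ℝ ℂ) := by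
      rw [hF, Polynomial.map_map]
      congr 1
    rw [hcomp, Polynomial.eval_map]
    have h1 : ((θ:ℂ)) = algebraMap ℝ ℂ θ := rfl
    rw [h1, Polynomial.eval₂_at_apply]
    rfl
  have hsplits : F.Splits := IsAlgClosed.splits F
  have hcard : Multiset.card F.roots = f.natDegree := by
    rw [Polynomial.splits_iff_card_roots.1 hsplits, hF,
      Polynomial.natDegree_map_eq_of_injective Int.cast_injective]
  have hfact := hsplits.eq_prod_roots
  have hleadC : F.leadingCoeff = ((f.leadingCoeff : ℤ) : ℂ) := by
    rw [hF]; exact Polynomial.leadingCoeff_map_of_injective Int.cast_injective f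
  have hleadabs : ‖F.leadingCoeff‖ = |(f.leadingCoeff : ℝ)| := by
    rw [hleadC, Complex.norm_intCast]
  have hlead1 : 1 ≤ |(f.leadingCoeff : ℝ)| := by
    have hne : f.leadingCoeff ≠ 0 := Polynomial.leadingCoeff_ne_zero.2 hf0
    rw [← Int.cast_abs]; exact_mod_cast Int.one_le_abs hne
  set vals := F.roots.map (fun α => ‖(θ:ℂ) - α‖) with hvals
  have hvpos : ∀ v ∈ vals, 0 < v := by
    intro v hv
    obtain ⟨α, hα, rfl⟩ := Multiset.mem_map.1 hv
    have hne : (θ:ℂ) - α ≠ 0 := by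
      intro heq
      have hαθ : α = (θ:ℂ) := by linear_combination -heq
      have hroot : F.eval α = 0 := (Polynomial.mem_roots hFne).1 hα
      rw [hαθ, hevalC] at hroot
      exact hθ (by exact_mod_cast hroot)
    exact norm_pos_iff.2 hne
  have hprodvals : ‖F.eval (θ:ℂ)‖ = ‖F.leadingCoeff‖ * vals.prod := by
    conv_lhs => rw [hfact]
    rw [Polynomial.eval_mul, Polynomial.eval_C, norm_mul, Polynomial.eval_multiset_prod,
      Multiset.map_map, abs_multiset_prod, Multiset.map_map, hvals]
    congr 1
    refine congrArg Multiset.prod (Multiset.map_congr rfl fun a _ => ?_)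
    simp
  have hEabs : |Polynomial.eval θ (f.map (Int.castRingHom ℝ))| = ‖F.eval (θ:ℂ)‖ := by
    rw [hevalC, Complex.norm_real, Real.norm_eq_abs]
  set Pn := (vals.filter (fun v => v ≤ ρ)).prod with hPn
  set Pf := (vals.filter (fun v => ¬ v ≤ ρ)).prod with hPf
  have hPnf : Pn * Pf = vals.prod := Multiset.prod_filter_mul_prod_filter_not _
  have hdm : diskMeasure f θ ρ = |(f.leadingCoeff : ℝ)| * Pn := rfl
  have hPn0 : 0 < Pn := ms_prod_pos fun a ha => hvpos a (Multiset.mem_of_mem_filter ha)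
  have hPf0 : 0 < Pf := ms_prod_pos fun a ha => hvpos a (Multiset.mem_of_mem_filter ha)
  set M := max 1 |θ| with hM
  have hM1 : (1:ℝ) ≤ M := le_max_left _ _
  have hMθ : |θ| ≤ M := le_max_right _ _
  have key1 : ∀ α : ℂ, ‖(θ:ℂ) - α‖ ≤ 2 * M * max 1 (‖α‖) := by
    intro α
    have h1 : ‖(θ:ℂ) - α‖ ≤ ‖(θ:ℂ)‖ + ‖α‖ := by
      exact norm_sub_le _ _
    rw [Complex.norm_real, Real.norm_eq_abs] at h1
    have h2 : ‖α‖ ≤ max 1 (‖α‖) := le_max_right _ _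
    have h3 : (1:ℝ) ≤ max 1 (‖α‖) := le_max_left _ _
    nlinarith
  -- bound on far product
  have hPfle : Pf ≤ (2*M)^(f.natDegree) * (F.roots.map fun α => max 1 (‖α‖)).prod := by
    have hfilter : vals.filter (fun v => ¬ v ≤ ρ)
        = (F.roots.filter ((fun v => ¬ v ≤ ρ) ∘ fun α => ‖(θ:ℂ) - α‖)).map
            (fun α => ‖(θ:ℂ) - α‖) := by
      rw [hvals, Multiset.filter_map]
    set t := F.roots.filter ((fun v => ¬ v ≤ ρ) ∘ fun α => ‖(θ:ℂ) - α‖) with ht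
    set tc := F.roots.filter (fun α => ¬ ((fun v => ¬ v ≤ ρ) ∘ fun α => ‖(θ:ℂ) - α‖) α) with htc
    have h1le : ∀ α : ℂ, (1:ℝ) ≤ 2 * M * max 1 (‖α‖) := by
      intro α
      have h3 : (1:ℝ) ≤ max 1 (‖α‖) := le_max_left _ _
      nlinarith
    calc Pf = (t.map fun α => ‖(θ:ℂ) - α‖).prod := by rw [hPf, hfilter]
    _ ≤ (t.map fun α => 2 * M * max 1 (‖α‖)).prod :=
        ms_prod_le (fun a _ => norm_nonneg _) (fun a _ => key1 a)
    _ ≤ (t.map fun α => 2 * M * max 1 (‖α‖)).prod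
          * (tc.map fun α => 2 * M * max 1 (‖α‖)).prod := by
        refine le_mul_of_one_le_right ?_ (one_le_ms_prod fun a _ => h1le a)
        apply Multiset.prod_nonneg
        intro x hx
        obtain ⟨b, _, rfl⟩ := Multiset.mem_map.1 hx
        positivity
    _ = (F.roots.map fun α => 2 * M * max 1 (‖α‖)).prod := by
        rw [← Multiset.prod_add, ← Multiset.map_add, ht, htc, Multiset.filter_add_not]
    _ = (2*M)^(f.natDegree) * (F.roots.map fun α => max 1 (‖α‖)).prod := by
        rw [Multiset.prod_map_mul (f := fun _ => 2*M) (g := fun α => max 1 (‖α‖)),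
          Multiset.map_const', Multiset.prod_replicate, hcard]
  have hprodmax0 : (0:ℝ) ≤ (F.roots.map fun α => max 1 (‖α‖)).prod := by
    apply Multiset.prod_nonneg
    intro x hx
    obtain ⟨b, _, rfl⟩ := Multiset.mem_map.1 hx
    positivity
  have hh1 : (1:ℝ) ≤ (heightN f : ℝ) := one_le_height hf0
  have hmahler : (F.roots.map fun α => max 1 (‖α‖)).prod
      ≤ Real.sqrt (f.natDegree + 1) * (heightN f : ℝ) := by
    have hl := landau F.roots F.leadingCoeff
    rw [← hfact] at hl
    have h2 : Real.sqrt (l2sq F) ≤ Real.sqrt ((f.natDegree + 1 : ℝ) * (heightN f : ℝ)^2) :=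
      Real.sqrt_le_sqrt (by rw [hF]; exact l2sq_map_le f)
    have h3 : Real.sqrt ((f.natDegree + 1 : ℝ) * (heightN f : ℝ)^2)
        = Real.sqrt (f.natDegree + 1) * (heightN f : ℝ) := by
      rw [Real.sqrt_mul (by positivity), Real.sqrt_sq (by positivity)]
    have h4 : (F.roots.map fun α => max 1 (‖α‖)).prod
        ≤ ‖F.leadingCoeff‖ * (F.roots.map fun α => max 1 (‖α‖)).prod := by
      refine le_mul_of_one_le_left hprodmax0 ?_
      rw [hleadabs]; exact hlead1
    linarith
  have hsq1 : (1:ℝ) ≤ Real.sqrt (f.natDegree + 1) := by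
    have h1 : (1:ℝ) ≤ (f.natDegree : ℝ) + 1 := by have : (0:ℝ) ≤ (f.natDegree : ℝ) := Nat.cast_nonneg _; linarith
    have h2 := Real.sqrt_le_sqrt h1
    rwa [Real.sqrt_one] at h2
  have hPfD : Pf ≤ 2^(f.natDegree+1) * Real.sqrt (f.natDegree+1) * M^(f.natDegree) * (heightN f : ℝ) := by
    calc Pf ≤ (2*M)^(f.natDegree) * (F.roots.map fun α => max 1 (‖α‖)).prod := hPfle
    _ ≤ (2*M)^(f.natDegree) * (Real.sqrt (f.natDegree + 1) * (heightN f : ℝ)) := by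
        have : (0:ℝ) ≤ (2*M)^(f.natDegree) := by positivity
        exact mul_le_mul_of_nonneg_left hmahler this
    _ = 2^(f.natDegree) * (Real.sqrt (f.natDegree + 1) * (M^(f.natDegree) * (heightN f : ℝ))) := by
        rw [mul_pow]; ring
    _ ≤ 2^(f.natDegree+1) * (Real.sqrt (f.natDegree + 1) * (M^(f.natDegree) * (heightN f : ℝ))) := by
        have h2 : (2:ℝ)^(f.natDegree) ≤ 2^(f.natDegree+1) :=
          pow_le_pow_right₀ (by norm_num) (by omega)
        have hpos : (0:ℝ) ≤ Real.sqrt (f.natDegree + 1) * (M^(f.natDegree) * (heightN f : ℝ)) := by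
          positivity
        exact mul_le_mul_of_nonneg_right h2 hpos
    _ = 2^(f.natDegree+1) * Real.sqrt (f.natDegree+1) * M^(f.natDegree) * (heightN f : ℝ) := by
        ring
  -- final assembly
  have hh0 : (0:ℝ) < (heightN f : ℝ) := lt_of_lt_of_le zero_lt_one hh1
  have hE : |Polynomial.eval θ (f.map (Int.castRingHom ℝ))| = |(f.leadingCoeff : ℝ)| * (Pn * Pf) := by
    rw [hEabs, hprodvals, hleadabs, hPnf]
  rw [hdm, hE]
  have heq : ((2 : ℝ) ^ (f.natDegree + 1))⁻¹ * (Real.sqrt (f.natDegree + 1))⁻¹ *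
        (M ^ f.natDegree)⁻¹ * ((|(f.leadingCoeff : ℝ)| * (Pn * Pf)) / (heightN f : ℝ))
      = (|(f.leadingCoeff : ℝ)| * Pn) *
          (Pf / (2^(f.natDegree+1) * Real.sqrt (f.natDegree+1) * M^(f.natDegree) * (heightN f : ℝ))) := by
    ring
  rw [heq]
  have hDpos : (0:ℝ) < 2^(f.natDegree+1) * Real.sqrt (f.natDegree+1) * M^(f.natDegree) * (heightN f : ℝ) := by
    have : (0:ℝ) < Real.sqrt (f.natDegree+1) := lt_of_lt_of_le zero_lt_one hsq1
    positivity
  have hfrac : Pf / (2^(f.natDegree+1) * Real.sqrt (f.natDegree+1) * M^(f.natDegree) * (heightN f : ℝ)) ≤ 1 :=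
    (div_le_one hDpos).2 hPfD
  calc (|(f.leadingCoeff : ℝ)| * Pn) *
          (Pf / (2^(f.natDegree+1) * Real.sqrt (f.natDegree+1) * M^(f.natDegree) * (heightN f : ℝ)))
      ≤ (|(f.leadingCoeff : ℝ)| * Pn) * 1 := by
        refine mul_le_mul_of_nonneg_left hfrac ?_
        positivity
  _ = |(f.leadingCoeff : ℝ)| * Pn := mul_one _
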